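/- Let π be a finite measure on ℝ^d × ℝ^d with ∫ |x − y|² dπ < ∞, and for t ∈ [0,1] define ρ_t = ((1−t)x + ty)#π and the vector measure j_t by ∫ ξ · dj_t = ∫ ξ((1−t)x + ty) · (y − x) dπ. Then the pair (ρ, j) satisfies the continuity equation in the distributional sense: for every ζ ∈ C_c^∞(ℝ^d × (0,1)), ∫₀¹ ∫ (∂_t ζ dρ_t + ∇ζ · dj_t) dt = 0. -/

import Mathlib

open MeasureTheory
open scoped InnerProductSpace

theorem stmt_14 (d : ℕ)
    (π : Measure (EuclideanSpace ℝ (Fin d) × EuclideanSpace ℝ (Fin d)))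
    [IsFiniteMeasure π]
    (hcost : Integrable (fun p => ‖p.1 - p.2‖ ^ 2) π)
    (ζ : EuclideanSpace ℝ (Fin d) × ℝ → ℝ)
    (hζ : ContDiff ℝ (⊤ : ℕ∞) ζ)
    (hζsupp : HasCompactSupport ζ)
    (hζt : ∀ x : EuclideanSpace ℝ (Fin d), ∀ t : ℝ, t ≤ 0 ∨ 1 ≤ t → ζ (x, t) = 0) :
    ∫ t in (0:ℝ)..1,
        ((∫ p, deriv (fun s => ζ ((1 - t) • p.1 + t • p.2, s)) t ∂π) +
          ∫ p, ⟪gradient (fun x => ζ (x, t)) ((1 - t) • p.1 + t • p.2),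
                p.2 - p.1⟫_ℝ ∂π) = 0 := by
  haveI : OpensMeasurableSpace (ℝ × EuclideanSpace ℝ (Fin d) × EuclideanSpace ℝ (Fin d)) := by
    infer_instance
  have hζd : Differentiable ℝ ζ := hζ.differentiable (by simp)
  obtain ⟨C, hC⟩ := (hζsupp.fderiv ℝ).exists_bound_of_continuous (hζ.continuous_fderiv (by simp))
  have hC0 : 0 ≤ C := le_trans (norm_nonneg _) (hC 0)
  -- derivative of the displacement curve
  have hγ : ∀ (p : EuclideanSpace ℝ (Fin d) × EuclideanSpace ℝ (Fin d)) (t : ℝ),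
      HasDerivAt (fun s : ℝ => (1 - s) • p.1 + s • p.2) (p.2 - p.1) t := by
    intro p t
    have h1 : HasDerivAt (fun s : ℝ => (1 - s) • p.1) ((-1 : ℝ) • p.1) t :=
      ((hasDerivAt_id t).const_sub 1).smul_const p.1
    have h2 : HasDerivAt (fun s : ℝ => s • p.2) ((1 : ℝ) • p.2) t :=
      (hasDerivAt_id t).smul_const p.2
    have h := h1.add h2
    refine h.congr_deriv ?_
    rw [neg_one_smul, one_smul]; abel
  have hF : ∀ (p : EuclideanSpace ℝ (Fin d) × EuclideanSpace ℝ (Fin d)) (t : ℝ),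
      HasDerivAt (fun s : ℝ => ζ ((1 - s) • p.1 + s • p.2, s))
        ((fderiv ℝ ζ ((1 - t) • p.1 + t • p.2, t)) (p.2 - p.1, (1:ℝ))) t := by
    intro p t
    have h1 : HasDerivAt (fun s : ℝ => (((1 - s) • p.1 + s • p.2 :
        EuclideanSpace ℝ (Fin d)), s)) (p.2 - p.1, (1:ℝ)) t :=
      (hγ p t).prodMk (hasDerivAt_id t)
    exact (hζd _).hasFDerivAt.comp_hasDerivAt t h1
  -- continuity of the full integrand in (t, p)
  have hcont : Continuous (fun z : ℝ × (EuclideanSpace ℝ (Fin d) × EuclideanSpace ℝ (Fin d)) =>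
      fderiv ℝ ζ ((1 - z.1) • z.2.1 + z.1 • z.2.2, z.1)) := by
    apply (hζ.continuous_fderiv (by simp)).comp
    fun_prop
  have hG : Continuous (fun z : ℝ × (EuclideanSpace ℝ (Fin d) × EuclideanSpace ℝ (Fin d)) =>
      (fderiv ℝ ζ ((1 - z.1) • z.2.1 + z.1 • z.2.2, z.1)) (z.2.2 - z.2.1, (1:ℝ))) :=
    hcont.clm_apply (by fun_prop)
  -- integrability of the transport speed
  have hv : Integrable (fun p : EuclideanSpace ℝ (Fin d) × EuclideanSpace ℝ (Fin d) =>
      ‖p.2 - p.1‖) π := by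
    have hg1 : Integrable (fun p : EuclideanSpace ℝ (Fin d) × EuclideanSpace ℝ (Fin d) =>
        (1:ℝ) + ‖p.1 - p.2‖ ^ 2) π := (integrable_const (1:ℝ)).add hcost
    refine hg1.mono' ((continuous_snd.sub continuous_fst).norm.aestronglyMeasurable) ?_
    filter_upwards with p
    rw [Real.norm_eq_abs, abs_of_nonneg (norm_nonneg _), norm_sub_rev]
    nlinarith [norm_nonneg (p.1 - p.2), sq_nonneg (‖p.1 - p.2‖ - 1)]
  have hb : Integrable (fun p : EuclideanSpace ℝ (Fin d) × EuclideanSpace ℝ (Fin d) =>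
      C * (1 + ‖p.2 - p.1‖)) π := (((integrable_const (1:ℝ)).add hv).const_mul C)
  -- pointwise bound
  have hbound : ∀ (t : ℝ) (p : EuclideanSpace ℝ (Fin d) × EuclideanSpace ℝ (Fin d)),
      ‖(fderiv ℝ ζ ((1 - t) • p.1 + t • p.2, t)) (p.2 - p.1, (1:ℝ))‖
        ≤ C * (1 + ‖p.2 - p.1‖) := by
    intro t p
    refine (ContinuousLinearMap.le_opNorm _ _).trans ?_
    apply mul_le_mul (hC _) ?_ (norm_nonneg _) hC0
    have hnn : ‖((p.2 - p.1 : EuclideanSpace ℝ (Fin d)), (1:ℝ))‖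
        = max ‖p.2 - p.1‖ 1 := by simp [Prod.norm_def]
    rw [hnn]
    exact max_le (by linarith [norm_nonneg (p.2 - p.1)])
      (by linarith [norm_nonneg (p.2 - p.1)])
  -- the key pointwise/integral identity at each time t
  have key : ∀ t : ℝ,
      ((∫ p, deriv (fun s => ζ ((1 - t) • p.1 + t • p.2, s)) t ∂π) +
        ∫ p, ⟪gradient (fun x => ζ (x, t)) ((1 - t) • p.1 + t • p.2), p.2 - p.1⟫_ℝ ∂π)
      = ∫ p, (fderiv ℝ ζ ((1 - t) • p.1 + t • p.2, t)) (p.2 - p.1, (1:ℝ)) ∂π := by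
    intro t
    have e1 : ∀ p : EuclideanSpace ℝ (Fin d) × EuclideanSpace ℝ (Fin d),
        deriv (fun s => ζ ((1 - t) • p.1 + t • p.2, s)) t
        = (fderiv ℝ ζ ((1 - t) • p.1 + t • p.2, t))
            ((0 : EuclideanSpace ℝ (Fin d)), (1:ℝ)) := by
      intro p
      exact ((hζd _).hasFDerivAt.comp_hasDerivAt t
        ((hasDerivAt_const t _).prodMk (hasDerivAt_id t))).deriv
    have e2 : ∀ p : EuclideanSpace ℝ (Fin d) × EuclideanSpace ℝ (Fin d),
        ⟪gradient (fun x => ζ (x, t)) ((1 - t) • p.1 + t • p.2), p.2 - p.1⟫_ℝ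
        = (fderiv ℝ ζ ((1 - t) • p.1 + t • p.2, t)) (p.2 - p.1, (0:ℝ)) := by
      intro p
      have hfd : HasFDerivAt (fun x => ζ (x, t))
          ((fderiv ℝ ζ ((1 - t) • p.1 + t • p.2, t)).comp
            (ContinuousLinearMap.inl ℝ (EuclideanSpace ℝ (Fin d)) ℝ))
          ((1 - t) • p.1 + t • p.2) :=
        (hζd _).hasFDerivAt.comp _ (hasFDerivAt_prodMk_left _ t)
      rw [hfd.hasGradientAt.gradient, InnerProductSpace.toDual_symm_apply]
      simp
    have contL : Continuous (fun p : EuclideanSpace ℝ (Fin d) × EuclideanSpace ℝ (Fin d) =>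
        fderiv ℝ ζ ((1 - t) • p.1 + t • p.2, t)) := hcont.comp (Continuous.prodMk_right t)
    have i1 : Integrable (fun p : EuclideanSpace ℝ (Fin d) × EuclideanSpace ℝ (Fin d) =>
        (fderiv ℝ ζ ((1 - t) • p.1 + t • p.2, t))
          ((0 : EuclideanSpace ℝ (Fin d)), (1:ℝ))) π := by
      refine (integrable_const C).mono'
        ((contL.clm_apply continuous_const).aestronglyMeasurable) ?_
      filter_upwards with p
      refine (ContinuousLinearMap.le_opNorm _ _).trans ?_
      have hone : ‖((0 : EuclideanSpace ℝ (Fin d)), (1:ℝ))‖ = 1 := by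
        simp [Prod.norm_def]
      rw [hone, mul_one]; exact hC _
    have i2 : Integrable (fun p : EuclideanSpace ℝ (Fin d) × EuclideanSpace ℝ (Fin d) =>
        (fderiv ℝ ζ ((1 - t) • p.1 + t • p.2, t)) (p.2 - p.1, (0:ℝ))) π := by
      refine (hb.mono' (contL.clm_apply (by fun_prop)).aestronglyMeasurable ?_)
      filter_upwards with p
      refine (ContinuousLinearMap.le_opNorm _ _).trans ?_
      have h : ‖((p.2 - p.1 : EuclideanSpace ℝ (Fin d)), (0:ℝ))‖ = ‖p.2 - p.1‖ := by
        simp [Prod.norm_def]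
      rw [h]
      exact mul_le_mul (hC _) (by linarith [norm_nonneg (p.2 - p.1)]) (norm_nonneg _) hC0
    simp only [e1, e2]
    rw [← integral_add i1 i2]
    refine integral_congr_ae (Filter.Eventually.of_forall fun p => ?_)
    show (fderiv ℝ ζ ((1 - t) • p.1 + t • p.2, t)) (0, 1) +
        (fderiv ℝ ζ ((1 - t) • p.1 + t • p.2, t)) (p.2 - p.1, 0)
      = (fderiv ℝ ζ ((1 - t) • p.1 + t • p.2, t)) (p.2 - p.1, 1)
    rw [← ContinuousLinearMap.map_add]
    congr 1
    simp [Prod.ext_iff]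
  -- rewrite the goal using `key` and swap the integrals
  rw [intervalIntegral.integral_of_le zero_le_one]
  simp only [key]
  have hμfin : IsFiniteMeasure ((volume : Measure ℝ).restrict (Set.Ioc (0:ℝ) 1)) := by
    constructor
    rw [Measure.restrict_apply_univ, Real.volume_Ioc]
    exact ENNReal.ofReal_lt_top
  have hbprod : Integrable (fun z : ℝ × (EuclideanSpace ℝ (Fin d) × EuclideanSpace ℝ (Fin d)) =>
      C * (1 + ‖z.2.2 - z.2.1‖))
      (((volume : Measure ℝ).restrict (Set.Ioc (0:ℝ) 1)).prod π) := by
    have haesm : AEStronglyMeasurable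
        (fun z : ℝ × (EuclideanSpace ℝ (Fin d) × EuclideanSpace ℝ (Fin d)) =>
          C * (1 + ‖z.2.2 - z.2.1‖))
        (((volume : Measure ℝ).restrict (Set.Ioc (0:ℝ) 1)).prod π) :=
      (continuous_const.mul (continuous_const.add
        (continuous_snd.snd.sub continuous_snd.fst).norm)).aestronglyMeasurable
    rw [integrable_prod_iff haesm]
    exact ⟨Filter.Eventually.of_forall fun t => hb,
      integrable_const (∫ p, ‖C * (1 + ‖p.2 - p.1‖)‖ ∂π)⟩
  have hint : Integrable (Function.uncurry fun (t : ℝ)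
      (p : EuclideanSpace ℝ (Fin d) × EuclideanSpace ℝ (Fin d)) =>
      (fderiv ℝ ζ ((1 - t) • p.1 + t • p.2, t)) (p.2 - p.1, (1:ℝ)))
      (((volume : Measure ℝ).restrict (Set.Ioc (0:ℝ) 1)).prod π) := by
    refine hbprod.mono' hG.aestronglyMeasurable ?_
    filter_upwards with z
    exact hbound z.1 z.2
  rw [MeasureTheory.integral_integral_swap hint]
  -- the inner time integral vanishes by the fundamental theorem of calculus
  have hzero : ∀ p : EuclideanSpace ℝ (Fin d) × EuclideanSpace ℝ (Fin d),
      (∫ t in Set.Ioc (0:ℝ) 1,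
        (fderiv ℝ ζ ((1 - t) • p.1 + t • p.2, t)) (p.2 - p.1, (1:ℝ))) = 0 := by
    intro p
    rw [← intervalIntegral.integral_of_le zero_le_one]
    have hderiv : ∀ t ∈ Set.uIcc (0:ℝ) 1,
        DifferentiableAt ℝ (fun s => ζ ((1 - s) • p.1 + s • p.2, s)) t :=
      fun t _ => (hF p t).differentiableAt
    have hdeq : (deriv fun s => ζ ((1 - s) • p.1 + s • p.2, s))
        = fun t => (fderiv ℝ ζ ((1 - t) • p.1 + t • p.2, t)) (p.2 - p.1, (1:ℝ)) :=
      funext fun t => (hF p t).deriv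
    have hcont' : Continuous fun t : ℝ =>
        (fderiv ℝ ζ ((1 - t) • p.1 + t • p.2, t)) (p.2 - p.1, (1:ℝ)) :=
      hG.comp (Continuous.prodMk_left p)
    have hFTC := intervalIntegral.integral_deriv_eq_sub hderiv
      (by rw [hdeq]; exact hcont'.intervalIntegrable 0 1)
    rw [hdeq] at hFTC
    rw [hFTC, hζt _ 1 (Or.inr le_rfl), hζt _ 0 (Or.inl le_rfl), sub_zero]
  simp only [hzero, integral_zero]
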